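/- arXiv:2202.06915 — 8 statements merged into one kernel-verified Lean document; each statement's English description precedes it below -/
import Mathlib

section
/- Let d ≥ 1, let t ≥ 1 be a real number, and let μ be a probability measure on ℝ^d × ℝ such that, μ-almost surely, ‖x‖₂ ≤ 1 and y ∈ {−1, +1}. Suppose there exist a unit vector u ∈ ℝ^d and a scalar γ > 0 such that μ({(x,y) : ⟨u, x⟩·y ≥ γ}) ≥ 1 − 1/t. Then the vector w_ref := (ln(t)/γ)·u satisfies ∫ ln(1 + exp(−y·⟨x, w_ref⟩)) dμ(x,y) ≤ (2 + ln(t)/γ)/t. -/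
open MeasureTheory
open scoped RealInnerProductSpace

/-- Proposition `fact:md:margin`: under approximate linear separability with
margin `γ` holding with probability at least `1 − 1/t`, the reference solution
`w_ref = (ln t / γ)·u` has logistic risk at most `(2 + ln(t)/γ)/t`. -/
theorem stmt_5 (d : ℕ) (hd : 1 ≤ d) (t : ℝ) (ht : 1 ≤ t)
    (μ : Measure (EuclideanSpace ℝ (Fin d) × ℝ)) [IsProbabilityMeasure μ]
    (hdata : ∀ᵐ p ∂μ, ‖p.1‖ ≤ 1 ∧ (p.2 = 1 ∨ p.2 = -1))
    (u : EuclideanSpace ℝ (Fin d)) (hu : ‖u‖ = 1) (γ : ℝ) (hγ : 0 < γ)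
    (hmargin : ENNReal.ofReal (1 - 1/t) ≤ μ {p | γ ≤ ⟪u, p.1⟫ * p.2}) :
    ∫ p, Real.log (1 + Real.exp (-(p.2 * ⟪p.1, (Real.log t / γ) • u⟫))) ∂μ
      ≤ (2 + Real.log t / γ) / t := by
  have ht0 : (0:ℝ) < t := lt_of_lt_of_le one_pos ht
  set R : ℝ := Real.log t / γ with hRdef
  have hlogt : 0 ≤ Real.log t := Real.log_nonneg ht
  have hR : 0 ≤ R := div_nonneg hlogt hγ.le
  set C : ℝ := Real.log 2 + R with hCdef
  have hC : 0 ≤ C := add_nonneg (Real.log_nonneg one_le_two) hR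
  set A : Set (EuclideanSpace ℝ (Fin d) × ℝ) := {p | γ ≤ ⟪u, p.1⟫ * p.2} with hAdef
  have hcont : Continuous fun p : EuclideanSpace ℝ (Fin d) × ℝ => ⟪u, p.1⟫ * p.2 :=
    (Continuous.inner continuous_const continuous_fst).mul continuous_snd
  have hAmeas : MeasurableSet A :=
    measurableSet_le measurable_const hcont.measurable
  set f : EuclideanSpace ℝ (Fin d) × ℝ → ℝ :=
    fun p => Real.log (1 + Real.exp (-(p.2 * ⟪p.1, R • u⟫))) with hfdef
  have hfcont : Continuous f := by
    apply Continuous.log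
    · exact continuous_const.add (Real.continuous_exp.comp
        ((continuous_snd.mul ((Continuous.inner continuous_fst continuous_const))).neg))
    · intro p
      have := Real.exp_pos (-(p.2 * ⟪p.1, R • u⟫))
      positivity
  -- pointwise bounds
  have hinner : ∀ p : EuclideanSpace ℝ (Fin d) × ℝ,
      p.2 * ⟪p.1, R • u⟫ = R * (⟪u, p.1⟫ * p.2) := by
    intro p
    rw [real_inner_smul_right, real_inner_comm]
    ring
  have hbound : ∀ᵐ p ∂μ, f p ≤ 1/t + Set.indicator Aᶜ (fun _ => C) p := by
    filter_upwards [hdata] with p hp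
    by_cases hpA : p ∈ A
    · have h1 : Real.log t ≤ p.2 * ⟪p.1, R • u⟫ := by
        rw [hinner]
        calc Real.log t = R * γ := by rw [hRdef, div_mul_cancel₀ _ hγ.ne']
        _ ≤ R * (⟪u, p.1⟫ * p.2) := by
            exact mul_le_mul_of_nonneg_left hpA hR
      have hexp : Real.exp (-(p.2 * ⟪p.1, R • u⟫)) ≤ 1/t := by
        rw [show (1:ℝ)/t = Real.exp (-(Real.log t)) by
          rw [Real.exp_neg, Real.exp_log ht0]; rw [one_div]]
        exact Real.exp_le_exp.2 (neg_le_neg h1)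
      have : f p ≤ Real.log (1 + 1/t) := by
        apply Real.log_le_log (by positivity)
        linarith
      have h2 : Real.log (1 + 1/t) ≤ 1/t := by
        have := Real.add_one_le_exp (1/t)
        calc Real.log (1 + 1/t) ≤ Real.log (Real.exp (1/t)) := by
              apply Real.log_le_log (by positivity); linarith
          _ = 1/t := Real.log_exp _
      have hi : Set.indicator Aᶜ (fun _ => C) p = 0 :=
        Set.indicator_of_notMem (by simpa using hpA) _
      rw [hi]; linarith
    · have hi : Set.indicator Aᶜ (fun _ => C) p = C :=
        Set.indicator_of_mem (by simpa using hpA) _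
      rw [hi]
      have habs : |p.2 * ⟪p.1, R • u⟫| ≤ R := by
        rw [abs_mul]
        have hy : |p.2| = 1 := by rcases hp.2 with h | h <;> simp [h]
        rw [hy, one_mul]
        calc |⟪p.1, R • u⟫| ≤ ‖p.1‖ * ‖R • u‖ := abs_real_inner_le_norm _ _
          _ ≤ 1 * R := by
              apply mul_le_mul hp.1 _ (norm_nonneg _) zero_le_one
              rw [norm_smul, hu, mul_one]
              simp [abs_of_nonneg hR]
          _ = R := one_mul R
      have h1 : -(p.2 * ⟪p.1, R • u⟫) ≤ R := by
        have := abs_le.1 habs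
        linarith
      have h2 : f p ≤ Real.log (2 * Real.exp R) := by
        apply Real.log_le_log (by positivity)
        have hexpR : (1:ℝ) ≤ Real.exp R := Real.one_le_exp hR
        have : Real.exp (-(p.2 * ⟪p.1, R • u⟫)) ≤ Real.exp R := Real.exp_le_exp.2 h1
        nlinarith
      have h3 : Real.log (2 * Real.exp R) = C := by
        rw [Real.log_mul two_ne_zero (Real.exp_ne_zero _), Real.log_exp]
      have : (0:ℝ) ≤ 1/t := by positivity
      linarith [h2, h3.le, h3.ge]
  -- integrability
  have hfmeas : AEStronglyMeasurable f μ := hfcont.aestronglyMeasurable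
  have hfint : Integrable f μ := by
    apply Integrable.mono' (integrable_const C) hfmeas
    filter_upwards [hdata] with p hp
    have hf0 : 0 ≤ f p := Real.log_nonneg
      (by linarith [(Real.exp_pos (-(p.2 * ⟪p.1, R • u⟫))).le])
    rw [Real.norm_eq_abs, abs_of_nonneg hf0]
    -- same bound as above
    have habs : |p.2 * ⟪p.1, R • u⟫| ≤ R := by
      rw [abs_mul]
      have hy : |p.2| = 1 := by rcases hp.2 with h | h <;> simp [h]
      rw [hy, one_mul]
      calc |⟪p.1, R • u⟫| ≤ ‖p.1‖ * ‖R • u‖ := abs_real_inner_le_norm _ _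
        _ ≤ 1 * R := by
            apply mul_le_mul hp.1 _ (norm_nonneg _) zero_le_one
            rw [norm_smul, hu, mul_one]
            simp [abs_of_nonneg hR]
        _ = R := one_mul R
    have h1 : -(p.2 * ⟪p.1, R • u⟫) ≤ R := by
      have := abs_le.1 habs; linarith
    have h2 : f p ≤ Real.log (2 * Real.exp R) := by
      apply Real.log_le_log (by positivity)
      have hexpR : (1:ℝ) ≤ Real.exp R := Real.one_le_exp hR
      have : Real.exp (-(p.2 * ⟪p.1, R • u⟫)) ≤ Real.exp R := Real.exp_le_exp.2 h1
      nlinarith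
    have h3 : Real.log (2 * Real.exp R) = C := by
      rw [Real.log_mul two_ne_zero (Real.exp_ne_zero _), Real.log_exp]
    linarith
  have hgint : Integrable (fun p => 1/t + Set.indicator Aᶜ (fun _ => C) p) μ := by
    exact (integrable_const (1/t)).add ((integrable_const C).indicator hAmeas.compl)
  -- complement measure bound
  have hcompl : (μ Aᶜ).toReal ≤ 1/t := by
    have h1t : (0:ℝ) ≤ 1 - 1/t := by
      have : 1/t ≤ 1 := by rw [div_le_one ht0]; exact ht
      linarith
    have hμA : μ Aᶜ ≤ ENNReal.ofReal (1/t) := by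
      have h := prob_compl_eq_one_sub hAmeas (μ := μ)
      rw [h]
      calc 1 - μ A ≤ 1 - ENNReal.ofReal (1 - 1/t) := tsub_le_tsub_left hmargin 1
        _ = ENNReal.ofReal (1/t) := by
            apply ENNReal.sub_eq_of_eq_add ENNReal.ofReal_ne_top
            rw [← ENNReal.ofReal_add (by positivity) h1t]
            rw [show 1/t + (1-1/t) = 1 by ring, ENNReal.ofReal_one]
    calc (μ Aᶜ).toReal ≤ (ENNReal.ofReal (1/t)).toReal :=
          ENNReal.toReal_mono ENNReal.ofReal_ne_top hμA
      _ = 1/t := ENNReal.toReal_ofReal (by positivity)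
  -- conclude
  have hint : ∫ p, f p ∂μ ≤ ∫ p, (1/t + Set.indicator Aᶜ (fun _ => C) p) ∂μ :=
    integral_mono_ae hfint hgint hbound
  have hval : ∫ p, (1/t + Set.indicator Aᶜ (fun _ => C) p) ∂μ
      = 1/t + (μ Aᶜ).toReal * C := by
    rw [integral_add (integrable_const (1/t)) ((integrable_const C).indicator hAmeas.compl)]
    rw [integral_const, integral_indicator_const _ hAmeas.compl]
    simp [measure_univ]
    exact Or.inl rfl
  have hlog2 : Real.log 2 ≤ 1 := by
    calc Real.log 2 ≤ Real.log (Real.exp 1) := by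
          apply Real.log_le_log two_pos
          have := Real.add_one_le_exp (1:ℝ); linarith
      _ = 1 := Real.log_exp 1
  calc ∫ p, f p ∂μ ≤ 1/t + (μ Aᶜ).toReal * C := by rw [← hval]; exact hint
    _ ≤ 1/t + (1/t) * C := by
        apply add_le_add le_rfl
        exact mul_le_mul_of_nonneg_right hcompl hC
    _ = (1 + C) / t := by field_simp
    _ ≤ (2 + R) / t := by
        gcongr ?_ / t
        linarith [hCdef.le, hCdef.ge, hlog2]
end

section
/- For every real r ≥ 1, |∫₀¹ ln(1 + exp(−r·s)) ds − π²/(12r)| ≤ 2·exp(−r). -/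
open MeasureTheory Set Real

lemma aux_series_log (t : ℝ) (ht : 0 < t) :
    HasSum (fun n : ℕ => ((-1:ℝ)^n/((n:ℝ)+1)) * Real.exp (-(((n:ℝ)+1) * t)))
      (Real.log (1 + Real.exp (-t))) := by
  have hx : |(-Real.exp (-t))| < 1 := by
    rw [abs_neg, abs_of_pos (Real.exp_pos _)]
    exact Real.exp_lt_one_iff.mpr (by linarith)
  have h := (Real.hasSum_pow_div_log_of_abs_lt_one hx).neg
  have h1 : (fun n : ℕ => -((-Real.exp (-t)) ^ (n+1) / (n+1)))
      = fun n : ℕ => ((-1:ℝ)^n/((n:ℝ)+1)) * Real.exp (-(((n:ℝ)+1) * t)) := by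
    funext n
    rw [neg_pow, ← Real.exp_nat_mul]
    push_cast
    ring_nf
  have h2 : -(-Real.log (1 - -Real.exp (-t))) = Real.log (1 + Real.exp (-t)) := by
    rw [neg_neg, sub_neg_eq_add]
  rw [h1, h2] at h
  exact h

lemma aux_zeta_shift : HasSum (fun n : ℕ => (1:ℝ) / ((n:ℝ)+1)^2) (π^2/6) := by
  have h := (hasSum_nat_add_iff' (f := fun n : ℕ => (1:ℝ)/(n:ℝ)^2) 1).mpr hasSum_zeta_two
  simpa using h

lemma aux_eta_two : HasSum (fun n : ℕ => (-1:ℝ)^n / ((n:ℝ)+1)^2) (π^2/12) := by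
  have hz := aux_zeta_shift
  have hodd : HasSum (fun k : ℕ => (2:ℝ) / (((2*k+1:ℕ):ℝ)+1)^2) (π^2/12) := by
    have h := hz.mul_left (1/2)
    have : (fun k : ℕ => (1/2:ℝ) * (1/((k:ℝ)+1)^2)) = fun k : ℕ => (2:ℝ) / (((2*k+1:ℕ):ℝ)+1)^2 := by
      funext k; push_cast; field_simp; ring
    rw [this] at h
    rw [show (π^2/12:ℝ) = 1/2*(π^2/6) by ring]
    exact h
  set h : ℕ → ℝ := fun n => if Even n then 0 else 2/((n:ℝ)+1)^2 with hh
  have hinj : Function.Injective (fun k : ℕ => 2*k+1) := fun a b hab => by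
    simpa using hab
  have hH : HasSum h (π^2/12) := by
    rw [← hinj.hasSum_iff (f := h)]
    · convert hodd using 1
      funext k
      simp only [Function.comp, hh]
      rw [if_neg (by simp [Nat.even_add_one, parity_simps])]
    · intro n hn
      simp only [Set.mem_range, not_exists] at hn
      have hev : Even n := by
        rcases Nat.even_or_odd n with he | ho
        · exact he
        · obtain ⟨k, hk⟩ := ho
          exact absurd (by omega : 2*k+1 = n) (hn k)
      simp [hh, hev]
  have := hz.sub hH
  have heq : (fun n : ℕ => (1:ℝ)/((n:ℝ)+1)^2 - h n) = fun n : ℕ => (-1:ℝ)^n / ((n:ℝ)+1)^2 := by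
    funext n
    rcases Nat.even_or_odd n with he | ho
    · simp [hh, he, he.neg_one_pow]
    · simp only [hh, if_neg (Nat.not_even_iff_odd.mpr ho), ho.neg_one_pow]
      ring
  rw [heq] at this
  rw [show (π^2/12:ℝ) = π^2/6 - π^2/12 by ring]
  exact this

lemma aux_exp_int (c : ℝ) (hc : 0 < c) :
    IntegrableOn (fun t : ℝ => Real.exp (-(c * t))) (Ioi 0) ∧
      (∫ t in Ioi (0:ℝ), Real.exp (-(c * t))) = 1/c := by
  constructor
  · simpa [neg_mul] using exp_neg_integrableOn_Ioi 0 hc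
  · have h := integral_comp_mul_left_Ioi (fun x => Real.exp (-x)) 0 hc
    simp only [mul_zero, integral_exp_neg_Ioi, neg_zero, Real.exp_zero, smul_eq_mul,
      mul_one] at h
    rw [h, one_div]

lemma aux_log_cont : Continuous (fun t : ℝ => Real.log (1 + Real.exp (-t))) := by
  have : ∀ t : ℝ, (0:ℝ) < 1 + Real.exp (-t) := fun t => by positivity
  exact Continuous.log (continuous_const.add
    (Real.continuous_exp.comp continuous_neg)) (fun t => (this t).ne')

lemma aux_log_le (t : ℝ) : Real.log (1 + Real.exp (-t)) ≤ Real.exp (-t) := by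
  have h := Real.log_le_sub_one_of_pos (x := 1 + Real.exp (-t)) (by positivity)
  linarith

lemma aux_log_nonneg (t : ℝ) : 0 ≤ Real.log (1 + Real.exp (-t)) := by
  apply Real.log_nonneg
  have := (Real.exp_pos (-t)).le
  linarith

lemma aux_log_intOn (a : ℝ) :
    IntegrableOn (fun t : ℝ => Real.log (1 + Real.exp (-t))) (Ioi a) := by
  apply Integrable.mono' (exp_neg_integrableOn_Ioi a one_pos)
    (aux_log_cont.aestronglyMeasurable.restrict)
  filter_upwards with t
  rw [Real.norm_eq_abs, abs_of_nonneg (aux_log_nonneg t)]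
  simpa using aux_log_le t

lemma aux_full_integral :
    (∫ t in Ioi (0:ℝ), Real.log (1 + Real.exp (-t))) = π^2/12 := by
  set F : ℕ → ℝ → ℝ := fun n t => ((-1:ℝ)^n/((n:ℝ)+1)) * Real.exp (-(((n:ℝ)+1) * t)) with hF
  have hpos : ∀ n : ℕ, (0:ℝ) < (n:ℝ)+1 := fun n => by positivity
  have hFmeas : ∀ n, AEStronglyMeasurable (F n) (volume.restrict (Ioi (0:ℝ))) := by
    intro n
    exact ((continuous_const.mul ((Real.continuous_exp.comp
      (continuous_const.mul continuous_id).neg))).aestronglyMeasurable).restrict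
  have hFint : ∀ n, IntegrableOn (F n) (Ioi (0:ℝ)) := fun n =>
    ((aux_exp_int _ (hpos n)).1.const_mul _)
  have hFval : ∀ n, (∫ t in Ioi (0:ℝ), F n t) = (-1:ℝ)^n / ((n:ℝ)+1)^2 := by
    intro n
    rw [hF]
    simp only
    rw [integral_const_mul, (aux_exp_int _ (hpos n)).2]
    field_simp
  have hlin : ∀ n, (∫⁻ t in Ioi (0:ℝ), ‖F n t‖₊) = ENNReal.ofReal ((1:ℝ)/((n:ℝ)+1)^2) := by
    intro n
    have habs : ∀ t : ℝ, (‖F n t‖₊ : ENNReal)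
        = ENNReal.ofReal ((1/((n:ℝ)+1)) * Real.exp (-(((n:ℝ)+1) * t))) := by
      intro t
      rw [← enorm_eq_nnnorm, Real.enorm_eq_ofReal_abs]
      congr 1
      rw [hF]
      simp only
      rw [abs_mul, abs_div, abs_pow, abs_neg, abs_one, one_pow,
        abs_of_pos (hpos n), Real.abs_exp]
    simp_rw [habs]
    rw [← ofReal_integral_eq_lintegral_ofReal
      (((aux_exp_int _ (hpos n)).1.const_mul _))
      (Filter.Eventually.of_forall fun t => by positivity)]
    rw [integral_const_mul, (aux_exp_int _ (hpos n)).2]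
    congr 1
    field_simp
  have hsum : Summable (fun n : ℕ => (1:ℝ)/((n:ℝ)+1)^2) := aux_zeta_shift.summable
  have hfin : (∑' n : ℕ, ∫⁻ t in Ioi (0:ℝ), ‖F n t‖₊) ≠ ⊤ := by
    simp_rw [hlin]
    rw [← ENNReal.ofReal_tsum_of_nonneg (fun n => by positivity) hsum]
    exact ENNReal.ofReal_ne_top
  have key := integral_tsum hFmeas hfin
  have hleft : (∫ t in Ioi (0:ℝ), ∑' n : ℕ, F n t)
      = ∫ t in Ioi (0:ℝ), Real.log (1 + Real.exp (-t)) := by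
    apply setIntegral_congr_fun measurableSet_Ioi
    intro t ht
    exact (aux_series_log t ht).tsum_eq
  rw [hleft] at key
  rw [key]
  simp_rw [hFval]
  exact aux_eta_two.tsum_eq

lemma aux_tail (r : ℝ) (hr : 0 ≤ r) :
    (0:ℝ) ≤ (∫ t in Ioi r, Real.log (1 + Real.exp (-t))) ∧
      (∫ t in Ioi r, Real.log (1 + Real.exp (-t))) ≤ Real.exp (-r) := by
  constructor
  · exact setIntegral_nonneg measurableSet_Ioi fun t _ => aux_log_nonneg t
  · calc (∫ t in Ioi r, Real.log (1 + Real.exp (-t)))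
        ≤ ∫ t in Ioi r, Real.exp (-t) := by
          apply setIntegral_mono_on (aux_log_intOn r)
            (by simpa [neg_mul] using exp_neg_integrableOn_Ioi r one_pos)
            measurableSet_Ioi
          intro t _
          exact aux_log_le t
      _ = Real.exp (-r) := integral_exp_neg_Ioi r

/-- the analytic estimate from Proposition `fact:margin:zero`:
for `r ≥ 1`, `|∫₀¹ ln(1 + exp(−r·s)) ds − π²/(12r)| ≤ 2·exp(−r)`. -/
theorem stmt_6 (r : ℝ) (hr : 1 ≤ r) :
    |(∫ s in (0:ℝ)..1, Real.log (1 + Real.exp (-(r * s)))) - Real.pi^2/(12*r)|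
      ≤ 2 * Real.exp (-r) := by
  have hr0 : (0:ℝ) < r := by linarith
  have hsub : (∫ s in (0:ℝ)..1, Real.log (1 + Real.exp (-(r * s))))
      = r⁻¹ * ∫ t in (0:ℝ)..r, Real.log (1 + Real.exp (-t)) := by
    have h := intervalIntegral.integral_comp_mul_left
      (f := fun t => Real.log (1 + Real.exp (-t))) (a := (0:ℝ)) (b := 1) hr0.ne'
    simpa [smul_eq_mul] using h
  have hsplit : (∫ t in (0:ℝ)..r, Real.log (1 + Real.exp (-t)))
      = π^2/12 - ∫ t in Ioi r, Real.log (1 + Real.exp (-t)) := by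
    rw [intervalIntegral.integral_of_le (by linarith : (0:ℝ) ≤ r)]
    have hunion : Ioc (0:ℝ) r ∪ Ioi r = Ioi 0 := Ioc_union_Ioi_eq_Ioi (by linarith)
    have hdisj : Disjoint (Ioc (0:ℝ) r) (Ioi r) := by
      apply Set.disjoint_left.mpr
      intro x hx hx'
      exact absurd hx.2 (not_le.mpr hx')
    have h := setIntegral_union hdisj measurableSet_Ioi
      ((aux_log_intOn 0).mono_set Ioc_subset_Ioi_self) (aux_log_intOn r)
    rw [hunion] at h
    rw [← aux_full_integral, h]
    ring
  obtain ⟨htail0, htail1⟩ := aux_tail r (by linarith)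
  rw [hsub, hsplit]
  set T := ∫ t in Ioi r, Real.log (1 + Real.exp (-t))
  have heq : r⁻¹ * (π^2/12 - T) - π^2/(12*r) = -(T/r) := by
    field_simp
    ring
  rw [heq, abs_neg, abs_of_nonneg (by positivity)]
  have h1 : T / r ≤ T := by
    rw [div_le_iff₀ hr0]
    nlinarith
  have h2 : Real.exp (-r) ≤ 2 * Real.exp (-r) := by
    have := (Real.exp_pos (-r)).le
    linarith
  linarith
end

section
/- Let E be a finite-dimensional real normed vector space with continuous dual E* carrying the dual (operator) norm ‖·‖_*. Let ℓ : ℝ × ℝ → ℝ be convex in its second argument with a subderivative selection ℓ' that is (C1,C2)-quadratically-bounded. Let B_x ≥ 0, and let x ∈ E* and y ∈ ℝ satisfy max{‖x‖_*, |y|} ≤ B_x. Then for all u, v ∈ E, |ℓ(y, x(u)) − ℓ(y, x(v))| ≤ B_x·‖u − v‖·[C1 + C2·B_x·(1 + ‖v‖ + ‖u − v‖/2)]. -/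
/-- One-dimensional core: for a convex loss with subgradient selection `ℓ'` satisfying the
quadratic bound, `|ℓ y (a+h) - ℓ y a| ≤ |h|·(C1 + C2·(|y| + |a| + |h|/2))`. -/
lemma stmt10_aux (ℓ ℓ' : ℝ → ℝ → ℝ) (C1 C2 : ℝ)
    (hsel : ∀ y z z' : ℝ, ℓ y z + ℓ' y z * (z' - z) ≤ ℓ y z')
    (hqb : ∀ y yh : ℝ, |ℓ' y yh| ≤ C1 + C2 * (|y| + |yh|))
    (hC2 : 0 ≤ C2) (y a h : ℝ) :
    |ℓ y (a + h) - ℓ y a| ≤ |h| * (C1 + C2 * (|y| + |a| + |h|/2)) := by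
  -- two-sided subgradient step bound
  have step : ∀ p q : ℝ, |ℓ y q - ℓ y p| ≤ max |ℓ' y p| |ℓ' y q| * |q - p| := by
    intro p q
    have h1 := hsel y p q
    have h2 := hsel y q p
    rw [abs_sub_le_iff]
    constructor
    · have e : ℓ' y q * (p - q) = -(ℓ' y q * (q - p)) := by ring
      have : ℓ y q - ℓ y p ≤ ℓ' y q * (q - p) := by nlinarith [h2, e]
      calc ℓ y q - ℓ y p ≤ ℓ' y q * (q - p) := this
        _ ≤ |ℓ' y q * (q - p)| := le_abs_self _
        _ = |ℓ' y q| * |q - p| := abs_mul _ _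
        _ ≤ max |ℓ' y p| |ℓ' y q| * |q - p| :=
          mul_le_mul_of_nonneg_right (le_max_right _ _) (abs_nonneg _)
    · have e : ℓ' y p * (q - p) = -(ℓ' y p * (p - q)) := by ring
      have : ℓ y p - ℓ y q ≤ ℓ' y p * (p - q) := by nlinarith [h1, e]
      calc ℓ y p - ℓ y q ≤ ℓ' y p * (p - q) := this
        _ ≤ |ℓ' y p * (p - q)| := le_abs_self _
        _ = |ℓ' y p| * |p - q| := abs_mul _ _
        _ = |ℓ' y p| * |q - p| := by rw [abs_sub_comm]
        _ ≤ max |ℓ' y p| |ℓ' y q| * |q - p| :=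
          mul_le_mul_of_nonneg_right (le_max_left _ _) (abs_nonneg _)
  refine le_of_forall_pos_le_add ?_
  intro ε hε
  obtain ⟨m, hm⟩ := exists_nat_gt (C2 * h ^ 2 / (2 * ε))
  set n : ℕ := m + 1 with hn_def
  have hn : (0:ℝ) < (n:ℝ) := by positivity
  have hn' : (n:ℝ) ≠ 0 := ne_of_gt hn
  set F : ℕ → ℝ := fun k => ℓ y (a + ((k:ℝ)/(n:ℝ)) * h) with hF
  have tele : ℓ y (a + h) - ℓ y a = ∑ k ∈ Finset.range n, (F (k+1) - F k) := by
    rw [Finset.sum_range_sub]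
    have h1 : F n = ℓ y (a + h) := by
      simp only [hF, div_self hn', one_mul]
    have h0 : F 0 = ℓ y a := by simp [hF]
    rw [h1, h0]
  have stepk : ∀ k ∈ Finset.range n,
      |F (k+1) - F k| ≤ |h|/(n:ℝ) * (C1 + C2 * (|y| + |a| + ((k:ℝ)+1)/(n:ℝ) * |h|)) := by
    intro k _
    have hk0 : (0:ℝ) ≤ (k:ℝ) := Nat.cast_nonneg k
    have zbound : ∀ j : ℝ, 0 ≤ j → j ≤ (k:ℝ)+1 →
        |ℓ' y (a + (j/(n:ℝ)) * h)| ≤ C1 + C2 * (|y| + |a| + ((k:ℝ)+1)/(n:ℝ) * |h|) := by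
      intro j hj0 hj1
      have habs : |a + (j/(n:ℝ)) * h| ≤ |a| + ((k:ℝ)+1)/(n:ℝ) * |h| := by
        calc |a + (j/(n:ℝ)) * h| ≤ |a| + |(j/(n:ℝ)) * h| := abs_add_le _ _
          _ = |a| + (j/(n:ℝ)) * |h| := by
              rw [abs_mul, abs_of_nonneg (by positivity : (0:ℝ) ≤ j/(n:ℝ))]
          _ ≤ |a| + ((k:ℝ)+1)/(n:ℝ) * |h| := by
              have : j/(n:ℝ) * |h| ≤ ((k:ℝ)+1)/(n:ℝ) * |h| := by
                gcongr
              linarith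
      calc |ℓ' y (a + (j/(n:ℝ)) * h)| ≤ C1 + C2 * (|y| + |a + (j/(n:ℝ)) * h|) := hqb _ _
        _ ≤ C1 + C2 * (|y| + (|a| + ((k:ℝ)+1)/(n:ℝ) * |h|)) := by
            have := mul_le_mul_of_nonneg_left (add_le_add_left habs |y|) hC2
            linarith
        _ = C1 + C2 * (|y| + |a| + ((k:ℝ)+1)/(n:ℝ) * |h|) := by ring
    have hqp : (a + (((k:ℝ)+1)/(n:ℝ)) * h) - (a + ((k:ℝ)/(n:ℝ)) * h) = h/(n:ℝ) := by
      field_simp; ring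
    have hdist : |(a + (((k:ℝ)+1)/(n:ℝ)) * h) - (a + ((k:ℝ)/(n:ℝ)) * h)| = |h|/(n:ℝ) := by
      rw [hqp, abs_div, abs_of_pos hn]
    have hcast : ((k+1 : ℕ) : ℝ) = (k:ℝ) + 1 := by push_cast; ring
    have hmax : max |ℓ' y (a + ((k:ℝ)/(n:ℝ)) * h)| |ℓ' y (a + (((k:ℝ)+1)/(n:ℝ)) * h)|
        ≤ C1 + C2 * (|y| + |a| + ((k:ℝ)+1)/(n:ℝ) * |h|) :=
      max_le (zbound (k:ℝ) hk0 (by linarith)) (zbound ((k:ℝ)+1) (by linarith) le_rfl)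
    calc |F (k+1) - F k| = |ℓ y (a + (((k:ℝ)+1)/(n:ℝ)) * h) - ℓ y (a + ((k:ℝ)/(n:ℝ)) * h)| := by
          simp only [hF, hcast]
      _ ≤ max |ℓ' y (a + ((k:ℝ)/(n:ℝ)) * h)| |ℓ' y (a + (((k:ℝ)+1)/(n:ℝ)) * h)| *
            |(a + (((k:ℝ)+1)/(n:ℝ)) * h) - (a + ((k:ℝ)/(n:ℝ)) * h)| := step _ _
      _ = max |ℓ' y (a + ((k:ℝ)/(n:ℝ)) * h)| |ℓ' y (a + (((k:ℝ)+1)/(n:ℝ)) * h)| * (|h|/(n:ℝ)) := by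
          rw [hdist]
      _ ≤ (C1 + C2 * (|y| + |a| + ((k:ℝ)+1)/(n:ℝ) * |h|)) * (|h|/(n:ℝ)) :=
          mul_le_mul_of_nonneg_right hmax (by positivity)
      _ = |h|/(n:ℝ) * (C1 + C2 * (|y| + |a| + ((k:ℝ)+1)/(n:ℝ) * |h|)) := by ring
  have gauss : ∀ N : ℕ, ∑ k ∈ Finset.range N, ((k:ℝ)+1) = (N:ℝ)*((N:ℝ)+1)/2 := by
    intro N
    induction N with
    | zero => simp
    | succ N ih => rw [Finset.sum_range_succ, ih]; push_cast; ring
  have sum_eval : ∑ k ∈ Finset.range n, |h|/(n:ℝ) * (C1 + C2 * (|y| + |a| + ((k:ℝ)+1)/(n:ℝ) * |h|))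
      = |h| * (C1 + C2 * (|y| + |a|)) + C2 * |h|^2 * ((n:ℝ)+1)/(2*(n:ℝ)) := by
    have expand : ∀ k : ℕ, |h|/(n:ℝ) * (C1 + C2 * (|y| + |a| + ((k:ℝ)+1)/(n:ℝ) * |h|))
        = |h|/(n:ℝ) * (C1 + C2 * (|y| + |a|)) + C2 * |h|^2/(n:ℝ)^2 * ((k:ℝ)+1) := by
      intro k; field_simp; ring
    rw [Finset.sum_congr rfl (fun k _ => expand k), Finset.sum_add_distrib,
      Finset.sum_const, Finset.card_range, ← Finset.mul_sum, gauss n]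
    field_simp
    linear_combination (2 * |h| * (C1 + C2 * |y| + C2 * |a|) * ((m:ℝ) + 1)) * mul_inv_cancel₀ hn' + (-(2 * |h| * (C1 + C2 * |y| + C2 * |a|))) * (by push_cast [hn_def]; ring : (n:ℝ) = (m:ℝ) + 1)
  have htail : C2 * |h|^2 * ((n:ℝ)+1)/(2*(n:ℝ)) ≤ C2 * |h|^2 / 2 + ε := by
    rw [sq_abs]
    have hmn : C2 * h ^ 2 < 2 * ε * (n:ℝ) := by
      have h1 : C2 * h ^ 2 < (m:ℝ) * (2 * ε) := (div_lt_iff₀ (by positivity)).mp hm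
      have h2 : (m:ℝ) ≤ (n:ℝ) := by push_cast [hn_def]; linarith
      nlinarith
    rw [div_le_iff₀ (by positivity : (0:ℝ) < 2*(n:ℝ))]
    nlinarith [sq_nonneg h, hn]
  calc |ℓ y (a + h) - ℓ y a| = |∑ k ∈ Finset.range n, (F (k+1) - F k)| := by rw [tele]
    _ ≤ ∑ k ∈ Finset.range n, |F (k+1) - F k| := Finset.abs_sum_le_sum_abs _ _
    _ ≤ ∑ k ∈ Finset.range n, |h|/(n:ℝ) * (C1 + C2 * (|y| + |a| + ((k:ℝ)+1)/(n:ℝ) * |h|)) :=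
        Finset.sum_le_sum stepk
    _ = |h| * (C1 + C2 * (|y| + |a|)) + C2 * |h|^2 * ((n:ℝ)+1)/(2*(n:ℝ)) := sum_eval
    _ ≤ |h| * (C1 + C2 * (|y| + |a|)) + (C2 * |h|^2 / 2 + ε) := by linarith
    _ = |h| * (C1 + C2 * (|y| + |a| + |h|/2)) + ε := by ring

/-- second inequality of Lemma `fact:quad_bound`: for a
`(C1,C2)`-quadratically-bounded loss and data `(x, y)` with `max{‖x‖_*, |y|} ≤ B_x`,
`|ℓ(y, x(u)) − ℓ(y, x(v))| ≤ B_x·‖u − v‖·[C1 + C2·B_x·(1 + ‖v‖ + ‖u − v‖/2)]`. -/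
theorem stmt_10 {E : Type*} [NormedAddCommGroup E] [NormedSpace ℝ E] [FiniteDimensional ℝ E]
    (ℓ ℓ' : ℝ → ℝ → ℝ) (C1 C2 : ℝ)
    (hconv : ∀ y, ConvexOn ℝ Set.univ (ℓ y))
    (hsel : ∀ y z z' : ℝ, ℓ y z + ℓ' y z * (z' - z) ≤ ℓ y z')
    (hqb : ∀ y yh : ℝ, |ℓ' y yh| ≤ C1 + C2 * (|y| + |yh|))
    (Bx : ℝ) (hBx : 0 ≤ Bx) (x : E →L[ℝ] ℝ) (y : ℝ)
    (hxy : max ‖x‖ |y| ≤ Bx) :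
    ∀ u v : E, |ℓ y (x u) - ℓ y (x v)|
      ≤ Bx * ‖u - v‖ * (C1 + C2 * Bx * (1 + ‖v‖ + ‖u - v‖/2)) := by
  have hC2 : 0 ≤ C2 := by
    by_contra hc
    push_neg at hc
    have hnc : 0 < -C2 := by linarith
    have ht : 0 < (|C1|+1)/(-C2) := div_pos (by positivity) hnc
    have h0 := hqb 0 ((|C1|+1)/(-C2))
    have habs : |(0:ℝ)| + |(|C1|+1)/(-C2)| = (|C1|+1)/(-C2) := by
      rw [abs_zero, abs_of_pos ht]; ring
    rw [habs] at h0
    have heq : C2 * ((|C1|+1)/(-C2)) = -(|C1|+1) := by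
      have hne : C2 ≠ 0 := ne_of_lt hc
      field_simp
    rw [heq] at h0
    have := abs_nonneg (ℓ' 0 ((|C1|+1)/(-C2)))
    have := le_abs_self C1
    linarith
  have hC1 : 0 ≤ C1 := by
    have h00 := hqb 0 0
    simp only [abs_zero, add_zero, mul_zero] at h00
    have := abs_nonneg (ℓ' 0 0)
    linarith
  intro u v
  have key := stmt10_aux ℓ ℓ' C1 C2 hsel hqb hC2 y (x v) (x u - x v)
  have hax : x v + (x u - x v) = x u := by ring
  rw [hax] at key
  have hxnorm : ‖x‖ ≤ Bx := le_trans (le_max_left _ _) hxy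
  have hy : |y| ≤ Bx := le_trans (le_max_right _ _) hxy
  have hh : |x u - x v| ≤ Bx * ‖u - v‖ := by
    have hm : x u - x v = x (u - v) := by rw [map_sub]
    rw [hm]
    calc |x (u-v)| = ‖x (u-v)‖ := (Real.norm_eq_abs _).symm
      _ ≤ ‖x‖ * ‖u-v‖ := x.le_opNorm _
      _ ≤ Bx * ‖u-v‖ := mul_le_mul_of_nonneg_right hxnorm (norm_nonneg _)
  have ha : |x v| ≤ Bx * ‖v‖ := by
    calc |x v| = ‖x v‖ := (Real.norm_eq_abs _).symm
      _ ≤ ‖x‖ * ‖v‖ := x.le_opNorm _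
      _ ≤ Bx * ‖v‖ := mul_le_mul_of_nonneg_right hxnorm (norm_nonneg _)
  have inner_nonneg : 0 ≤ C1 + C2 * (|y| + |x v| + |x u - x v|/2) := by
    have h1 : 0 ≤ |y| + |x v| + |x u - x v|/2 := by positivity
    nlinarith
  have inner_le : C1 + C2 * (|y| + |x v| + |x u - x v|/2)
      ≤ C1 + C2 * (Bx + Bx*‖v‖ + (Bx*‖u-v‖)/2) := by
    have h1 : |y| + |x v| + |x u - x v|/2 ≤ Bx + Bx*‖v‖ + (Bx*‖u-v‖)/2 := by linarith
    nlinarith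
  have final := mul_le_mul hh inner_le inner_nonneg (by positivity)
  calc |ℓ y (x u) - ℓ y (x v)| ≤ |x u - x v| * (C1 + C2 * (|y| + |x v| + |x u - x v|/2)) := key
    _ ≤ (Bx*‖u-v‖) * (C1 + C2 * (Bx + Bx*‖v‖ + (Bx*‖u-v‖)/2)) := final
    _ = Bx * ‖u - v‖ * (C1 + C2 * Bx * (1 + ‖v‖ + ‖u - v‖/2)) := by ring
end

section
/- Let E be a finite-dimensional real normed vector space with dual E* (dual norm ‖·‖_*), let ψ : E → ℝ be differentiable and 1-strongly convex with respect to the norm, let S ⊆ E be a closed convex set, let η ≥ 0, let w₀, w_ref ∈ S, and let g_1, …, g_t ∈ E*. Suppose the iterates w_1, …, w_t ∈ S satisfy, for each i < t, the first-order optimality condition of the mirror-descent update: ⟨η·g_{i+1} + ∇ψ(w_{i+1}) − ∇ψ(w_i), v − w_{i+1}⟩ ≥ 0 for all v ∈ S. Then (a) ‖w_{i+1} − w_i‖ ≤ η·‖g_{i+1}‖_* for every i < t, and (b) D_ψ(w_ref, w_t) ≤ D_ψ(w_ref, w₀) + η·Σ_{i<t} ⟨g_{i+1}, w_ref − w_i⟩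 + Σ_{i<t} (η²/2)·‖g_{i+1}‖_*². -/
/-- Bregman divergence of a differentiable function `ψ`. -/
noncomputable def bregman {E : Type*} [NormedAddCommGroup E] [NormedSpace ℝ E]
    (ψ : E → ℝ) (w v : E) : ℝ :=
  ψ w - ψ v - fderiv ℝ ψ v (w - v)

/-- Lemma `fact:md`, linearized form: deterministic mirror descent.
If the iterates satisfy the first-order optimality conditions of the MD update, then
(a) `‖w_{i+1} − w_i‖ ≤ η‖g_{i+1}‖_*` and (b) the Bregman divergence to the reference point
satisfies the stated regret inequality. -/
theorem stmt_11 {E : Type*} [NormedAddCommGroup E] [NormedSpace ℝ E] [FiniteDimensional ℝ E]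
    (ψ : E → ℝ) (hψ : Differentiable ℝ ψ)
    (hsc : ∀ w v : E, ‖w - v‖^2/2 ≤ bregman ψ w v)
    (S : Set E) (hSc : IsClosed S) (hSconv : Convex ℝ S)
    (η : ℝ) (hη : 0 ≤ η) (t : ℕ)
    (wref : E) (hwref : wref ∈ S)
    (g : ℕ → E →L[ℝ] ℝ) (w : ℕ → E)
    (hw : ∀ i ≤ t, w i ∈ S)
    (hopt : ∀ i < t, ∀ v ∈ S,
      0 ≤ (η • g (i+1) + fderiv ℝ ψ (w (i+1)) - fderiv ℝ ψ (w i)) (v - w (i+1))) :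
    (∀ i < t, ‖w (i+1) - w i‖ ≤ η * ‖g (i+1)‖) ∧
    bregman ψ wref (w t)
      ≤ bregman ψ wref (w 0)
        + η * ∑ i ∈ Finset.range t, g (i+1) (wref - w i)
        + ∑ i ∈ Finset.range t, (η^2/2) * ‖g (i+1)‖^2 := by
  have ha : ∀ i < t, ‖w (i+1) - w i‖ ≤ η * ‖g (i+1)‖ := by
    intro i hi
    have h1 := hopt i hi (w i) (hw i hi.le)
    have hsc1 := hsc (w (i+1)) (w i)
    have hsc2 := hsc (w i) (w (i+1))
    have hnsym : ‖w i - w (i+1)‖ = ‖w (i+1) - w i‖ := norm_sub_rev _ _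
    have hg : g (i+1) (w i - w (i+1)) ≤ ‖g (i+1)‖ * ‖w (i+1) - w i‖ := by
      calc g (i+1) (w i - w (i+1)) ≤ ‖g (i+1) (w i - w (i+1))‖ := le_abs_self _
        _ ≤ ‖g (i+1)‖ * ‖w i - w (i+1)‖ := (g (i+1)).le_opNorm _
        _ = ‖g (i+1)‖ * ‖w (i+1) - w i‖ := by rw [hnsym]
    simp only [ContinuousLinearMap.sub_apply, ContinuousLinearMap.add_apply,
      ContinuousLinearMap.smul_apply, smul_eq_mul, bregman, map_sub] at h1 hsc1 hsc2 hg
    rw [hnsym] at hsc2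
    -- ‖d‖² ≤ η * g (w i - w(i+1)) ≤ η ‖g‖ ‖d‖
    have key : ‖w (i+1) - w i‖^2 ≤ η * (‖g (i+1)‖ * ‖w (i+1) - w i‖) := by
      nlinarith [hg, mul_le_mul_of_nonneg_left hg hη]
    rcases (norm_nonneg (w (i+1) - w i)).eq_or_lt with h0 | h0
    · rw [← h0]; positivity
    · nlinarith [key]
  refine ⟨ha, ?_⟩
  have hb : ∀ i < t, bregman ψ wref (w (i+1)) ≤ bregman ψ wref (w i)
      + η * g (i+1) (wref - w i) + η^2/2 * ‖g (i+1)‖^2 := by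
    intro i hi
    have h1 := hopt i hi wref hwref
    have hsc1 := hsc (w (i+1)) (w i)
    have hg : g (i+1) (w i - w (i+1)) ≤ ‖g (i+1)‖ * ‖w (i+1) - w i‖ := by
      calc g (i+1) (w i - w (i+1)) ≤ ‖g (i+1) (w i - w (i+1))‖ := le_abs_self _
        _ ≤ ‖g (i+1)‖ * ‖w i - w (i+1)‖ := (g (i+1)).le_opNorm _
        _ = ‖g (i+1)‖ * ‖w (i+1) - w i‖ := by rw [norm_sub_rev]
    have hsq : η * (‖g (i+1)‖ * ‖w (i+1) - w i‖) - ‖w (i+1) - w i‖^2/2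
        ≤ η^2/2 * ‖g (i+1)‖^2 := by
      nlinarith [sq_nonneg (η * ‖g (i+1)‖ - ‖w (i+1) - w i‖)]
    simp only [ContinuousLinearMap.sub_apply, ContinuousLinearMap.add_apply,
      ContinuousLinearMap.smul_apply, smul_eq_mul, bregman, map_sub] at h1 hsc1 hg ⊢
    nlinarith [mul_le_mul_of_nonneg_left hg hη]
  have main : ∀ n ≤ t, bregman ψ wref (w n) ≤ bregman ψ wref (w 0)
      + η * ∑ i ∈ Finset.range n, g (i+1) (wref - w i)
      + ∑ i ∈ Finset.range n, (η^2/2) * ‖g (i+1)‖^2 := by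
    intro n hn
    induction n with
    | zero => simp
    | succ n ih =>
      have hnt : n < t := hn
      have h2 := hb n hnt
      have h3 := ih hnt.le
      rw [Finset.sum_range_succ, Finset.sum_range_succ]
      linarith [h2, h3]
  exact main t le_rfl
end

section
/- Let E be a finite-dimensional real normed vector space with dual E* (dual norm ‖·‖_*), let ψ : E → ℝ be differentiable and 1-strongly convex with respect to the norm, let S ⊆ E be a closed convex set, let η ≥ 0, let w₀, w_ref ∈ S, and let f_1, …, f_t : E → ℝ be convex functions. Suppose for each i < t that g_{i+1} ∈ E* is a subgradient of f_{i+1} at w_i (i.e., f_{i+1}(v) ≥ f_{i+1}(w_i) + ⟨g_{i+1}, v − w_i⟩ for all v ∈ E), and that the iterates w_1, …, w_t ∈ S satisfy the first-order optimality condition of the mirror-descent update: ⟨η·g_{i+1} + ∇ψ(w_{i+1}) − ∇ψ(w_i), v − w_{i+1}⟩ ≥ 0 for all v ∈ S. Then D_ψ(w_ref, w_t) ≤ D_ψ(w_ref, w₀) + η·Σ_{i<t} [f_{i+1}(w_ref) − f_{i+1}(w_i)] + Σ_{i<t} (η²/2)·‖g_{i+1}‖_*². -/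
/-- Lemma `fact:md`, convex form: deterministic mirror descent on convex
objectives. If each `g_{i+1}` is a subgradient of the convex objective `f_{i+1}` at `w_i`
and the iterates satisfy the first-order optimality conditions of the MD update, then the
Bregman divergence to the reference point satisfies the stated regret inequality. -/
theorem stmt_12 {E : Type*} [NormedAddCommGroup E] [NormedSpace ℝ E] [FiniteDimensional ℝ E]
    (ψ : E → ℝ) (hψ : Differentiable ℝ ψ)
    (hsc : ∀ w v : E, ‖w - v‖^2/2 ≤ bregman ψ w v)
    (S : Set E) (hSc : IsClosed S) (hSconv : Convex ℝ S)
    (η : ℝ) (hη : 0 ≤ η) (t : ℕ)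
    (wref : E) (hwref : wref ∈ S)
    (f : ℕ → E → ℝ) (hfconv : ∀ i, ConvexOn ℝ Set.univ (f i))
    (g : ℕ → E →L[ℝ] ℝ) (w : ℕ → E)
    (hw : ∀ i ≤ t, w i ∈ S)
    (hsub : ∀ i < t, ∀ v : E, f (i+1) (w i) + g (i+1) (v - w i) ≤ f (i+1) v)
    (hopt : ∀ i < t, ∀ v ∈ S,
      0 ≤ (η • g (i+1) + fderiv ℝ ψ (w (i+1)) - fderiv ℝ ψ (w i)) (v - w (i+1))) :
    bregman ψ wref (w t)
      ≤ bregman ψ wref (w 0)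
        + η * ∑ i ∈ Finset.range t, (f (i+1) wref - f (i+1) (w i))
        + ∑ i ∈ Finset.range t, (η^2/2) * ‖g (i+1)‖^2 := by
  have step : ∀ i < t,
      bregman ψ wref (w (i+1)) ≤ bregman ψ wref (w i)
        + η * (f (i+1) wref - f (i+1) (w i)) + (η^2/2) * ‖g (i+1)‖^2 := by
    intro i hi
    -- three point identity
    have h3 : bregman ψ wref (w i) - bregman ψ wref (w (i+1)) - bregman ψ (w (i+1)) (w i)
        = (fderiv ℝ ψ (w (i+1)) - fderiv ℝ ψ (w i)) (wref - w (i+1)) := by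
      simp only [bregman, ContinuousLinearMap.sub_apply]
      have e1 : wref - w i = (wref - w (i+1)) + (w (i+1) - w i) := by abel
      rw [e1, map_add]
      ring
    have hoptr := hopt i hi wref hwref
    simp only [ContinuousLinearMap.add_apply, ContinuousLinearMap.sub_apply,
      ContinuousLinearMap.smul_apply, smul_eq_mul] at hoptr
    -- subgradient bound
    have hsubr := hsub i hi wref
    -- bound on g (i+1) (w i - w (i+1))
    have hg : g (i+1) (w i - w (i+1)) ≤ ‖g (i+1)‖ * ‖w i - w (i+1)‖ := by
      calc g (i+1) (w i - w (i+1)) ≤ ‖g (i+1) (w i - w (i+1))‖ := le_abs_self _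
        _ ≤ ‖g (i+1)‖ * ‖w i - w (i+1)‖ := (g (i+1)).le_opNorm _
    have hsc' := hsc (w (i+1)) (w i)
    have hgsplit : g (i+1) (wref - w (i+1))
        = g (i+1) (wref - w i) + g (i+1) (w i - w (i+1)) := by
      rw [← map_add]; congr 1; abel
    have hamgm : η * (‖g (i+1)‖ * ‖w i - w (i+1)‖)
        ≤ (η^2/2) * ‖g (i+1)‖^2 + ‖w i - w (i+1)‖^2/2 := by
      nlinarith [sq_nonneg (η * ‖g (i+1)‖ - ‖w i - w (i+1)‖)]
    have hnormsym : ‖w (i+1) - w i‖ = ‖w i - w (i+1)‖ := norm_sub_rev _ _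
    have hgw : η * g (i+1) (wref - w i) ≤ η * (f (i+1) wref - f (i+1) (w i)) := by
      apply mul_le_mul_of_nonneg_left _ hη
      linarith
    have hgwi : η * g (i+1) (w i - w (i+1)) ≤ η * (‖g (i+1)‖ * ‖w i - w (i+1)‖) := by
      apply mul_le_mul_of_nonneg_left hg hη
    rw [hnormsym] at hsc'
    simp only [ContinuousLinearMap.sub_apply] at h3
    have hgs2 : η * g (i+1) (wref - w (i+1))
        = η * g (i+1) (wref - w i) + η * g (i+1) (w i - w (i+1)) := by
      rw [hgsplit]; ring
    linarith
  -- sum up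
  have main : ∀ n, n ≤ t →
      bregman ψ wref (w n) ≤ bregman ψ wref (w 0)
        + η * ∑ i ∈ Finset.range n, (f (i+1) wref - f (i+1) (w i))
        + ∑ i ∈ Finset.range n, (η^2/2) * ‖g (i+1)‖^2 := by
    intro n hn
    induction n with
    | zero => simp
    | succ k ih =>
      have hk : k < t := hn
      have ihk := ih (le_of_lt hk)
      have hs := step k hk
      rw [Finset.sum_range_succ, Finset.sum_range_succ]
      linarith
  exact main t le_rfl
end

section
/- Let H be a finite-dimensional real inner product space, let S ⊆ H be a nonempty closed convex set, and let Π_S : H → H satisfy, for every u ∈ H: Π_S(u) ∈ S and ⟨u − Π_S(u), v − Π_S(u)⟩ ≤ 0 for all v ∈ S (the metric projection onto S). Fix γ ∈ [0,1] and a step size η with 0 ≤ η ≤ 1/2. Let vectors x₀, x₁, …, x_t ∈ H with ‖x_i‖ ≤ 1 and scalars r₁, …, r_t ∈ ℝ with |r_i| ≤ 1 be given, define for v ∈ H the TD update direction G_{i+1}(v) := x_i·(⟨x_i − γ·x_{i+1}, v⟩ − r_{i+1}), and let w_ref ∈ S, w₀ ∈ S, and w_{i+1} := Π_S(w_i − η·G_{i+1}(w_i))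 for i < t. Then ‖w_t − w_ref‖² ≤ ‖w₀ − w_ref‖² + η·Σ_{i<t} [ −⟨x_i, w_i − w_ref⟩² + γ²·⟨x_{i+1}, w_i − w_ref⟩² − 2·⟨G_{i+1}(w_ref), w_i − w_ref⟩ + 4η·‖G_{i+1}(w_ref)‖² ]. -/
open scoped RealInnerProductSpace

set_option maxHeartbeats 1600000 in
/-- Lemma `fact:td:det`: deterministic analysis of projected temporal
difference (TD) iterates with discount factor `γ` and step size `η ≤ 1/2`. -/
theorem stmt_13 {H : Type*} [NormedAddCommGroup H] [InnerProductSpace ℝ H]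
    [FiniteDimensional ℝ H]
    (S : Set H) (hS : S.Nonempty) (hSc : IsClosed S) (hSconv : Convex ℝ S)
    (proj : H → H)
    (hproj : ∀ u : H, proj u ∈ S ∧ ∀ v ∈ S, ⟪u - proj u, v - proj u⟫ ≤ 0)
    (γ η : ℝ) (hγ : γ ∈ Set.Icc (0:ℝ) 1) (hη : η ∈ Set.Icc (0:ℝ) (1/2))
    (t : ℕ) (x : ℕ → H) (hx : ∀ i ≤ t, ‖x i‖ ≤ 1)
    (r : ℕ → ℝ) (hr : ∀ i, 1 ≤ i → i ≤ t → |r i| ≤ 1)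
    (G : ℕ → H → H)
    (hG : ∀ (i : ℕ) (v : H), G (i+1) v = (⟪x i - γ • x (i+1), v⟫ - r (i+1)) • x i)
    (wref w₀ : H) (hwref : wref ∈ S) (hw₀ : w₀ ∈ S)
    (w : ℕ → H) (hwinit : w 0 = w₀)
    (hstep : ∀ i < t, w (i+1) = proj (w i - η • G (i+1) (w i))) :
    ‖w t - wref‖^2 ≤ ‖w 0 - wref‖^2 + η * ∑ i ∈ Finset.range t,
      (-(⟪x i, w i - wref⟫)^2 + γ^2 * (⟪x (i+1), w i - wref⟫)^2
        - 2 * ⟪G (i+1) wref, w i - wref⟫ + 4 * η * ‖G (i+1) wref‖^2) := by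
  obtain ⟨hη0, hη2⟩ := hη
  -- projection decreases distance to wref
  have hproj_le : ∀ u : H, ‖proj u - wref‖^2 ≤ ‖u - wref‖^2 := by
    intro u
    have h := (hproj u).2 wref hwref
    have key : ‖u - wref‖^2
        = ‖u - proj u‖^2 + 2*⟪u - proj u, proj u - wref⟫ + ‖proj u - wref‖^2 := by
      have h0 : u - wref = (u - proj u) + (proj u - wref) := by abel
      rw [h0, norm_add_sq_real]
    have h2 : ⟪u - proj u, proj u - wref⟫ = -⟪u - proj u, wref - proj u⟫ := by
      rw [← inner_neg_right]; congr 1; abel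
    nlinarith [sq_nonneg ‖u - proj u‖]
  -- per-step inequality
  have step : ∀ i < t, ‖w (i+1) - wref‖^2 ≤ ‖w i - wref‖^2 +
      η * (-(⟪x i, w i - wref⟫)^2 + γ^2 * (⟪x (i+1), w i - wref⟫)^2
        - 2 * ⟪G (i+1) wref, w i - wref⟫ + 4 * η * ‖G (i+1) wref‖^2) := by
    intro i hi
    have hle : ‖w (i+1) - wref‖^2 ≤ ‖(w i - η • G (i+1) (w i)) - wref‖^2 := by
      rw [hstep i hi]; exact hproj_le _
    set d : H := w i - wref with hd
    set a : ℝ := ⟪x i, d⟫ with ha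
    set b : ℝ := ⟪x (i+1), d⟫ with hb
    set cw : ℝ := ⟪x i - γ • x (i+1), w i⟫ - r (i+1) with hcw
    set cr : ℝ := ⟪x i - γ • x (i+1), wref⟫ - r (i+1) with hcr
    have hdiff : cw - cr = a - γ * b := by
      simp only [hcw, hcr, ha, hb, hd, inner_sub_left, inner_sub_right,
        real_inner_smul_left]
      ring
    have hGw : G (i+1) (w i) = cw • x i := by rw [hG]
    have hGr : G (i+1) wref = cr • x i := by rw [hG]
    set X : ℝ := ‖x i‖^2 with hX
    have hX0 : (0:ℝ) ≤ X := sq_nonneg _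
    have hX1 : X ≤ 1 := by
      have := hx i (le_of_lt hi)
      nlinarith [norm_nonneg (x i)]
    have hnormGw : ‖G (i+1) (w i)‖^2 = cw^2 * X := by
      rw [hGw, norm_smul]
      simp [mul_pow, sq_abs, hX]
    have hnormGr : ‖G (i+1) wref‖^2 = cr^2 * X := by
      rw [hGr, norm_smul]
      simp [mul_pow, sq_abs, hX]
    have hinnGw : ⟪G (i+1) (w i), d⟫ = cw * a := by
      rw [hGw, real_inner_smul_left]
    have hinnGr : ⟪G (i+1) wref, d⟫ = cr * a := by
      rw [hGr, real_inner_smul_left]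
    have hexp : ‖(w i - η • G (i+1) (w i)) - wref‖^2
        = ‖d‖^2 - 2 * η * (cw * a) + η^2 * (cw^2 * X) := by
      have h0 : (w i - η • G (i+1) (w i)) - wref = d - η • G (i+1) (w i) := by
        rw [hd]; abel
      have hione : ⟪d, G (i+1) (w i)⟫ = cw * a := by
        rw [real_inner_comm]; exact hinnGw
      rw [h0, norm_sub_sq_real, real_inner_smul_right, norm_smul, mul_pow,
        Real.norm_eq_abs, sq_abs, hione, hnormGw]
      ring
    rw [hinnGr, hnormGr]
    set s : ℝ := a - γ * b with hsdef
    have hcwv : cw = cr + s := by rw [hsdef]; linarith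
    rw [hexp, hcwv] at hle
    clear_value d a b cw cr X s
    have h1 : (cr + s)^2 ≤ 2*cr^2 + 2*s^2 := by nlinarith [sq_nonneg (cr - s)]
    have h2 : η^2 * X * (cr + s)^2 ≤ η^2 * X * (2*cr^2 + 2*s^2) :=
      mul_le_mul_of_nonneg_left h1 (mul_nonneg (sq_nonneg η) hX0)
    have hηX : η * X ≤ 1/2 := by nlinarith
    have h3 : 2 * (η^2 * s^2 * X) ≤ η * s^2 := by
      nlinarith [mul_nonneg hη0 (sq_nonneg s)]
    have hs2 : -a^2 + γ^2*b^2 + 2*s*a = s^2 := by rw [hsdef]; ring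
    nlinarith [h2, h3, mul_nonneg (mul_nonneg (mul_nonneg hη0 hη0) (sq_nonneg cr)) hX0]
  -- induction
  have main : ∀ n ≤ t, ‖w n - wref‖^2 ≤ ‖w 0 - wref‖^2 + η * ∑ i ∈ Finset.range n,
      (-(⟪x i, w i - wref⟫)^2 + γ^2 * (⟪x (i+1), w i - wref⟫)^2
        - 2 * ⟪G (i+1) wref, w i - wref⟫ + 4 * η * ‖G (i+1) wref‖^2) := by
    intro n hn
    induction n with
    | zero => simp
    | succ m ih =>
      have hm : m ≤ t := le_of_lt (Nat.lt_of_succ_le hn)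
      have ihm := ih hm
      have hs := step m (Nat.lt_of_succ_le hn)
      rw [Finset.sum_range_succ, mul_add]
      linarith
  exact main t le_rfl
end

section
/- Let H be a finite-dimensional real inner product space, let ψ : H → ℝ be differentiable, let t > 0, and let w, q, g : [0, t] → H with w and q differentiable and g continuous. Suppose q_s = ∇ψ(w_s) for all s ∈ [0, t] and q'(s) = −g_s for all s ∈ [0, t] (the mirror flow). Then for any w_ref ∈ H, D_ψ(w_ref, w_t) = D_ψ(w_ref, w₀) + ∫₀ᵗ ⟨w_ref − w_s, g_s⟩ ds. -/
open scoped RealInnerProductSpace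

/-- Lemma `fact:mf`, equality form: along the mirror flow
`q_s = ∇ψ(w_s)`, `q̇_s = −g_s`, the Bregman divergence to any reference point satisfies
`D_ψ(w_ref, w_t) = D_ψ(w_ref, w₀) + ∫₀ᵗ ⟪w_ref − w_s, g_s⟫ ds`. -/
theorem stmt_14 {H : Type*} [NormedAddCommGroup H] [InnerProductSpace ℝ H]
    [FiniteDimensional ℝ H]
    (ψ : H → ℝ) (hψ : Differentiable ℝ ψ)
    (t : ℝ) (ht : 0 < t) (w q g : ℝ → H)
    (hw : ∀ s ∈ Set.Icc (0:ℝ) t, DifferentiableAt ℝ w s)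
    (hg : ContinuousOn g (Set.Icc (0:ℝ) t))
    (hq : ∀ s ∈ Set.Icc (0:ℝ) t, q s = gradient ψ (w s))
    (hq' : ∀ s ∈ Set.Icc (0:ℝ) t, HasDerivAt q (-(g s)) s)
    (wref : H) :
    ψ wref - ψ (w t) - ⟪gradient ψ (w t), wref - w t⟫
      = ψ wref - ψ (w 0) - ⟪gradient ψ (w 0), wref - w 0⟫
        + ∫ s in (0:ℝ)..t, ⟪wref - w s, g s⟫ := by
  set F : ℝ → ℝ := fun s => ψ wref - ψ (w s) - ⟪q s, wref - w s⟫ with hF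
  have hIcc : Set.uIcc (0:ℝ) t = Set.Icc 0 t := Set.uIcc_of_le ht.le
  have key : ∀ s ∈ Set.uIcc (0:ℝ) t, HasDerivAt F (⟪wref - w s, g s⟫) s := by
    intro s hs
    rw [hIcc] at hs
    have hws := hw s hs
    have hwd : HasDerivAt w (deriv w s) s := hws.hasDerivAt
    have hgrad : HasGradientAt ψ (gradient ψ (w s)) (w s) := (hψ (w s)).hasGradientAt
    have hcomp : HasDerivAt (fun u => ψ (w u)) ⟪gradient ψ (w s), deriv w s⟫ s := by
      have := hgrad.hasFDerivAt.comp_hasDerivAt s hwd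
      exact this
    have hsub : HasDerivAt (fun u => wref - w u) (-(deriv w s)) s := by
      simpa using (hwd.const_sub wref)
    have hinner : HasDerivAt (fun u => ⟪q u, wref - w u⟫)
        (⟪q s, -(deriv w s)⟫ + ⟪-(g s), wref - w s⟫) s :=
      HasDerivAt.inner ℝ (hq' s hs) hsub
    have : HasDerivAt F
        (-⟪gradient ψ (w s), deriv w s⟫ -
          (⟪q s, -(deriv w s)⟫ + ⟪-(g s), wref - w s⟫)) s := by
      exact (hcomp.const_sub (ψ wref)).sub hinner |>.congr_deriv (by simp only [inner_neg_right, inner_neg_left])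
    convert this using 1
    rw [hq s hs]
    rw [inner_neg_right, inner_neg_left, real_inner_comm (g s) (wref - w s)]
    ring
  have hcont : ContinuousOn (fun s => ⟪wref - w s, g s⟫) (Set.Icc (0:ℝ) t) := by
    apply ContinuousOn.inner
    · exact continuousOn_const.sub (fun s hs => (hw s hs).continuousAt.continuousWithinAt)
    · exact hg
  have hint : IntervalIntegrable (fun s => ⟪wref - w s, g s⟫)
      MeasureTheory.volume 0 t := by
    apply ContinuousOn.intervalIntegrable
    rwa [hIcc]
  have := intervalIntegral.integral_eq_sub_of_hasDerivAt key hint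
  have h0 : (0:ℝ) ∈ Set.Icc (0:ℝ) t := by constructor <;> simp [ht.le]
  have htt : t ∈ Set.Icc (0:ℝ) t := by constructor <;> simp [ht.le]
  have e0 := hq 0 h0
  have et := hq t htt
  simp only [hF] at this
  rw [← e0, ← et]
  linarith [this]
end

section
/- Let H be a finite-dimensional real inner product space, let ψ : H → ℝ be differentiable, let f : H → ℝ be convex, let t > 0, and let w, q, g : [0, t] → H with w and q differentiable and g continuous. Suppose q_s = ∇ψ(w_s) and q'(s) = −g_s for all s ∈ [0, t], and that each g_s is a subgradient of f at w_s (i.e., f(v) ≥ f(w_s) + ⟨g_s, v − w_s⟩ for all v ∈ H). Then for any w_ref ∈ H, D_ψ(w_ref, w_t) + ∫₀ᵗ f(w_s) ds ≤ D_ψ(w_ref, w₀) + t·f(w_ref). -/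
open scoped RealInnerProductSpace

/-- Lemma `fact:mf`, convex form: along the mirror flow
`q_s = ∇ψ(w_s)`, `q̇_s = −g_s` with each `g_s` a subgradient of the convex objective `f`
at `w_s`, `D_ψ(w_ref, w_t) + ∫₀ᵗ f(w_s) ds ≤ D_ψ(w_ref, w₀) + t·f(w_ref)`. -/
theorem stmt_15 {H : Type*} [NormedAddCommGroup H] [InnerProductSpace ℝ H]
    [FiniteDimensional ℝ H]
    (ψ : H → ℝ) (hψ : Differentiable ℝ ψ)
    (f : H → ℝ) (hf : ConvexOn ℝ Set.univ f)
    (t : ℝ) (ht : 0 < t) (w q g : ℝ → H)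
    (hw : ∀ s ∈ Set.Icc (0:ℝ) t, DifferentiableAt ℝ w s)
    (hg : ContinuousOn g (Set.Icc (0:ℝ) t))
    (hq : ∀ s ∈ Set.Icc (0:ℝ) t, q s = gradient ψ (w s))
    (hq' : ∀ s ∈ Set.Icc (0:ℝ) t, HasDerivAt q (-(g s)) s)
    (hsub : ∀ s ∈ Set.Icc (0:ℝ) t, ∀ v : H, f (w s) + ⟪g s, v - w s⟫ ≤ f v)
    (wref : H) :
    (ψ wref - ψ (w t) - ⟪gradient ψ (w t), wref - w t⟫)
        + ∫ s in (0:ℝ)..t, f (w s)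
      ≤ (ψ wref - ψ (w 0) - ⟪gradient ψ (w 0), wref - w 0⟫) + t * f wref := by
  set F : ℝ → ℝ := fun s => ψ wref - ψ (w s) - ⟪q s, wref - w s⟫ with hF
  have hIcc : Set.uIcc (0:ℝ) t = Set.Icc 0 t := Set.uIcc_of_le ht.le
  have h0 : (0:ℝ) ∈ Set.Icc (0:ℝ) t := ⟨le_refl _, ht.le⟩
  have hT : t ∈ Set.Icc (0:ℝ) t := ⟨ht.le, le_refl _⟩
  -- derivative of F
  have hF' : ∀ s ∈ Set.Icc (0:ℝ) t, HasDerivAt F (⟪g s, wref - w s⟫) s := by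
    intro s hs
    have hws : HasDerivAt w (deriv w s) s := (hw s hs).hasDerivAt
    have h1 : HasDerivAt (fun u => ψ (w u)) (⟪gradient ψ (w s), deriv w s⟫) s := by
      have := ((hψ (w s)).hasGradientAt.hasFDerivAt).comp_hasDerivAt s hws
      simpa [Function.comp_def] using this
    have h2 : HasDerivAt (fun u => ⟪q u, wref - w u⟫)
        (⟪q s, (0 : H) - deriv w s⟫ + ⟪-(g s), wref - w s⟫) s :=
      (hq' s hs).inner ℝ ((hasDerivAt_const s wref).sub hws)
    have h3 : HasDerivAt F (0 - ⟪gradient ψ (w s), deriv w s⟫ -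
        (⟪q s, (0 : H) - deriv w s⟫ + ⟪-(g s), wref - w s⟫)) s :=
      ((hasDerivAt_const s (ψ wref)).sub h1).sub h2
    convert h3 using 1
    rw [hq s hs]
    simp [inner_neg_left, inner_sub_right, inner_sub_left]
    ring
  -- continuity of integrands
  have hwc : ContinuousOn w (Set.Icc (0:ℝ) t) := fun s hs =>
    (hw s hs).continuousAt.continuousWithinAt
  have hic : ContinuousOn (fun s => ⟪g s, wref - w s⟫) (Set.Icc (0:ℝ) t) :=
    hg.inner (continuousOn_const.sub hwc)
  have hint : IntervalIntegrable (fun s => ⟪g s, wref - w s⟫) MeasureTheory.volume 0 t :=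
    (hic.mono (by rw [hIcc])).intervalIntegrable
  have hfc : ContinuousOn (fun s => f (w s)) (Set.Icc (0:ℝ) t) :=
    (hf.continuousOn isOpen_univ).comp hwc (fun x _ => trivial)
  have hfint : IntervalIntegrable (fun s => f (w s)) MeasureTheory.volume 0 t :=
    (hfc.mono (by rw [hIcc])).intervalIntegrable
  have hcint : IntervalIntegrable (fun _ : ℝ => f wref) MeasureTheory.volume 0 t :=
    intervalIntegrable_const
  -- FTC
  have hftc : (∫ s in (0:ℝ)..t, ⟪g s, wref - w s⟫) = F t - F 0 :=
    intervalIntegral.integral_eq_sub_of_hasDerivAt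
      (fun s hs => hF' s (hIcc ▸ hs)) hint
  -- pointwise bound and integral comparison
  have hmono : (∫ s in (0:ℝ)..t, ⟪g s, wref - w s⟫)
      ≤ ∫ s in (0:ℝ)..t, (f wref - f (w s)) := by
    apply intervalIntegral.integral_mono_on ht.le hint (hcint.sub hfint)
    intro s hs
    have := hsub s hs wref
    linarith
  have hsplit : (∫ s in (0:ℝ)..t, (f wref - f (w s)))
      = t * f wref - ∫ s in (0:ℝ)..t, f (w s) := by
    rw [intervalIntegral.integral_sub hcint hfint, intervalIntegral.integral_const]
    simp
  have hFt : F t = ψ wref - ψ (w t) - ⟪gradient ψ (w t), wref - w t⟫ := by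
    show ψ wref - ψ (w t) - ⟪q t, wref - w t⟫ = _
    rw [hq t hT]
  have hF0 : F 0 = ψ wref - ψ (w 0) - ⟪gradient ψ (w 0), wref - w 0⟫ := by
    show ψ wref - ψ (w 0) - ⟪q 0, wref - w 0⟫ = _
    rw [hq 0 h0]
  rw [← hFt, ← hF0]
  linarith [hftc ▸ hmono, hsplit]
end
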